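/- For α > 0, let f_α(t) = (1/α)( sinh(αt)/cosh(α/2) − αt ). Then −24 ∫₀^{1/2} ( 2t f_α(t) + f_α(t)² + α^{−2} f_α′(t)² ) dt = 1 − 12α^{−2} + 24α^{−3} tanh(α/2). -/

import Mathlib

/-- The normalized minimizer profile `f_α(t) = (1/α)(sinh(αt)/cosh(α/2) − αt)`. -/
noncomputable def falpha (α t : ℝ) : ℝ := (1 / α) * (Real.sinh (α * t) / Real.cosh (α / 2) - α * t)

/-- Explicit integral evaluation:
`−24 ∫₀^{1/2} (2t f_α(t) + f_α(t)² + α⁻² f_α'(t)²) dt = 1 − 12α⁻² + 24α⁻³ tanh(α/2)`. -/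
theorem integral_identity_gfun (α : ℝ) (hα : 0 < α) :
    (-24) * ∫ t in (0 : ℝ)..(1 / 2),
        (2 * t * falpha α t + (falpha α t) ^ 2 + (1 / α ^ 2) * (deriv (falpha α) t) ^ 2)
      = 1 - 12 / α ^ 2 + 24 / α ^ 3 * Real.tanh (α / 2) := by
  have hα0 : α ≠ 0 := ne_of_gt hα
  have hcpos : 0 < Real.cosh (α / 2) := Real.cosh_pos _
  have hc : Real.cosh (α / 2) ≠ 0 := hcpos.ne'
  set c := Real.cosh (α / 2) with hcdef
  -- derivative of falpha
  have hd : ∀ t : ℝ, HasDerivAt (falpha α) (Real.cosh (α * t) / c - 1) t := by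
    intro t
    have h1 : HasDerivAt (fun t : ℝ => Real.sinh (α * t)) (α * Real.cosh (α * t)) t := by
      have := (Real.hasDerivAt_sinh (α * t)).comp t ((hasDerivAt_id t).const_mul α)
      simpa [Function.comp_def, mul_comm] using this
    have h2 : HasDerivAt (fun t : ℝ => (1 / α) * (Real.sinh (α * t) / c - α * t))
        ((1 / α) * (α * Real.cosh (α * t) / c - α * 1)) t :=
      (((h1.div_const c).sub ((hasDerivAt_id t).const_mul α)).const_mul (1 / α))
    have heq : (1 / α) * (α * Real.cosh (α * t) / c - α * 1) = Real.cosh (α * t) / c - 1 := by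
      field_simp
    rw [heq] at h2
    exact h2
  have hderiv_eq : ∀ t, deriv (falpha α) t = Real.cosh (α * t) / c - 1 := fun t => (hd t).deriv
  -- antiderivative
  set F : ℝ → ℝ := fun t => Real.sinh (2 * α * t) / (2 * α ^ 3 * c ^ 2)
      - 2 * Real.sinh (α * t) / (α ^ 3 * c) + t / α ^ 2 - t ^ 3 / 3 with hF
  set G : ℝ → ℝ := fun t => 2 * t * falpha α t + (falpha α t) ^ 2
      + (1 / α ^ 2) * (Real.cosh (α * t) / c - 1) ^ 2 with hG
  have hFd : ∀ t : ℝ, HasDerivAt F (G t) t := by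
    intro t
    have h1 : HasDerivAt (fun t : ℝ => Real.sinh (2 * α * t)) (2 * α * Real.cosh (2 * α * t)) t := by
      have := (Real.hasDerivAt_sinh (2 * α * t)).comp t ((hasDerivAt_id t).const_mul (2 * α))
      simpa [Function.comp_def, mul_comm] using this
    have h2 : HasDerivAt (fun t : ℝ => Real.sinh (α * t)) (α * Real.cosh (α * t)) t := by
      have := (Real.hasDerivAt_sinh (α * t)).comp t ((hasDerivAt_id t).const_mul α)
      simpa [Function.comp_def, mul_comm] using this
    have h3 : HasDerivAt (fun t : ℝ => t / α ^ 2) (1 / α ^ 2) t := by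
      simpa using (hasDerivAt_id t).div_const (α ^ 2)
    have h4 : HasDerivAt (fun t : ℝ => t ^ 3 / 3) (t ^ 2) t := by
      have := (hasDerivAt_pow 3 t).div_const 3
      norm_num at this
      simpa using this
    have h5 : HasDerivAt F
        (2 * α * Real.cosh (2 * α * t) / (2 * α ^ 3 * c ^ 2)
          - (2 * (α * Real.cosh (α * t))) / (α ^ 3 * c) + 1 / α ^ 2 - t ^ 2) t := by
      exact (((h1.div_const _).sub ((h2.const_mul 2).div_const _)).add h3).sub h4
    have heq : 2 * α * Real.cosh (2 * α * t) / (2 * α ^ 3 * c ^ 2)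
          - (2 * (α * Real.cosh (α * t))) / (α ^ 3 * c) + 1 / α ^ 2 - t ^ 2 = G t := by
      have hch2 : Real.cosh (2 * α * t) = 2 * Real.cosh (α * t) ^ 2 - 1 := by
        rw [mul_assoc, Real.cosh_two_mul, Real.sinh_sq]
        ring
      have hsh : Real.sinh (α * t) ^ 2 = Real.cosh (α * t) ^ 2 - 1 := Real.sinh_sq _
      simp only [hG, falpha, hch2]
      field_simp
      linear_combination (-(c ^ 2)) * hsh
    rw [heq] at h5
    exact h5
  have hGcont : Continuous G := by
    simp only [hG, falpha]
    fun_prop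
  have hint : (∫ t in (0:ℝ)..(1/2), G t) = F (1/2) - F 0 :=
    intervalIntegral.integral_eq_sub_of_hasDerivAt (fun t _ => hFd t)
      (hGcont.intervalIntegrable _ _)
  have hcongr : (∫ t in (0:ℝ)..(1/2),
      (2 * t * falpha α t + (falpha α t) ^ 2 + (1 / α ^ 2) * (deriv (falpha α) t) ^ 2))
      = ∫ t in (0:ℝ)..(1/2), G t := by
    apply intervalIntegral.integral_congr
    intro t _
    simp [hG, hderiv_eq t]
  rw [hcongr, hint]
  -- evaluate
  have hF0 : F 0 = 0 := by simp [hF]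
  have hsinhα : Real.sinh α = 2 * Real.sinh (α / 2) * c := by
    have := Real.sinh_two_mul (α / 2)
    rw [show 2 * (α / 2) = α by ring] at this
    linarith [this]
  have hFh : F (1/2) = Real.sinh α / (2 * α ^ 3 * c ^ 2)
      - 2 * Real.sinh (α / 2) / (α ^ 3 * c) + (1/2) / α ^ 2 - (1/2:ℝ) ^ 3 / 3 := by
    simp only [hF]
    rw [show 2 * α * (1/2:ℝ) = α by ring, show α * (1/2:ℝ) = α / 2 by ring]
  rw [hF0, hFh, hsinhα, Real.tanh_eq_sinh_div_cosh]
  field_simp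
  ring
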